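/- With the notation of the context, assume ε = 0, q_z = 0 and q ≥ 1. Then for every i with r − r_z ≤ i ≤ p−1, the monomial x_i x_p^{q−1} x_n^{υ−1} does not belong to the Ratliff-Rush closure of inP; in particular there is no integer m ≥ 1 with x_i x_p^{q−1} x_n^{υ−1} · (x_i^2)^m ∈ (inP)^{m+1}. -/

import Mathlib

/-!
When `ε = q_z = 0`, every generator of `inP` except the products `x_a x_b` (`a ≤ b ≤ p - 1`)
is divisible by `x_p^q` or by `x_n^v`, so none of them divides `x_i^{2k+1} x_p^{q-1} x_n^{v-1}`; among the
`x_a x_b` only `x_i^2` divides it. A product of `k + 1` generators dividing this monomial would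
therefore have `x_i`-degree at least `2(k + 1)`. As `x_i^2 ∈ inP`, membership of
`x_i x_p^{q-1} x_n^{v-1}` in some `inP^{k+1} : inP^k` would put
`x_i x_p^{q-1} x_n^{v-1} (x_i^2)^k` in `inP^{k+1}`.
-/

/-- The Ratliff-Rush closure set `⋃_{k ≥ 1} (I^{k+1} : I^k)`. -/
def rrSet {R : Type*} [CommRing R] (I : Ideal R) : Set R :=
  ⋃ k ∈ Set.Ici (1 : ℕ), ((I ^ (k + 1)).colon ((I ^ k : Ideal R) : Set R) : Set R)

open Fin.NatCast in
/-- The variable `x_i` (for `1 ≤ i ≤ n`) of `K[x_1, …, x_n] = MvPolynomial (Fin n) K`. -/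
noncomputable def xv (K : Type*) [Field K] (n : ℕ) [NeZero n] (i : ℕ) : MvPolynomial (Fin n) K :=
  MvPolynomial.X ((i - 1 : ℕ) : Fin n)

/-- The monomial generators of the initial ideal `inP`: `x_i x_p^q` for `r ≤ i ≤ p`;
`x_j x_p^{q−qz−ε} x_n^{v−w}` for `εp + r − rz ≤ j ≤ p`; `x_n^v`; and `x_i x_j` for
`1 ≤ i ≤ j ≤ p−1`. A monomial with a negative exponent is omitted. -/
noncomputable def inPgens (K : Type*) [Field K] (n : ℕ) [NeZero n] (p q r v w rz ε : ℕ) (qz : ℤ) :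
    Set (MvPolynomial (Fin n) K) :=
  {f | ∃ i : ℕ, r ≤ i ∧ i ≤ p ∧ f = xv K n i * xv K n p ^ q} ∪
  {f | ∃ j : ℕ, ε * p + r ≤ j + rz ∧ j ≤ p ∧ qz + ε ≤ (q : ℤ) ∧
    f = xv K n j * xv K n p ^ ((q : ℤ) - qz - ε).toNat * xv K n n ^ (v - w)} ∪
  {xv K n n ^ v} ∪
  {f | ∃ i j : ℕ, 1 ≤ i ∧ i ≤ j ∧ j ≤ p - 1 ∧ f = xv K n i * xv K n j}

namespace MvPolynomial

variable {σ R : Type*} [CommSemiring R]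

theorem exists_le_of_mem_support_of_mem_span {G : Set (MvPolynomial σ R)}
    {f : MvPolynomial σ R} (hf : f ∈ Ideal.span G) {d : σ →₀ ℕ} (hd : d ∈ f.support) :
    ∃ g ∈ G, ∃ e ∈ g.support, e ≤ d := by
  classical
  induction hf using Submodule.span_induction generalizing d with
  | mem g hg => exact ⟨g, hg, d, hd, le_rfl⟩
  | zero => simp at hd
  | add x y _ _ hx hy =>
    rcases Finset.mem_union.mp (support_add hd) with h | h
    exacts [hx h, hy h]
  | smul a x _ hx =>
    obtain ⟨b, -, c, hc, rfl⟩ := Finset.mem_add.mp (support_mul a x hd)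
    obtain ⟨g, hg, e, he, hle⟩ := hx hc
    exact ⟨g, hg, e, he, hle.trans le_add_self⟩

theorem mul_le_of_mem_support_of_mem_span_pow {G : Set (MvPolynomial σ R)} {s : σ} {c : ℕ}
    {d : σ →₀ ℕ} (hG : ∀ g ∈ G, ∀ e ∈ g.support, e ≤ d → c ≤ e s) (k : ℕ)
    {f : MvPolynomial σ R} (hf : f ∈ Ideal.span G ^ k) {d' : σ →₀ ℕ} (hd' : d' ∈ f.support)
    (hle : d' ≤ d) : c * k ≤ d' s := by
  classical
  induction k generalizing f d' with
  | zero => simp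
  | succ k ih =>
    rw [pow_succ'] at hf
    induction hf using Submodule.mul_induction_on' generalizing d' with
    | mem_mul_mem x hx y hy =>
      obtain ⟨a, ha, b, hb, rfl⟩ := Finset.mem_add.mp (support_mul x y hd')
      obtain ⟨g, hg, e, he, hea⟩ := exists_le_of_mem_support_of_mem_span hx ha
      have hc : c ≤ a s := (hG g hg e he (hea.trans (le_self_add.trans hle))).trans (hea s)
      have hk : c * k ≤ b s := ih hy hb (le_add_self.trans hle)
      simp only [Finsupp.add_apply]
      linarith
    | add x _ y _ hx hy =>
      rcases Finset.mem_union.mp (support_add hd') with h | h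
      exacts [hx h hle, hy h hle]

theorem mul_le_of_monomial_mem_span_pow [Nontrivial R] {G : Set (MvPolynomial σ R)} {s : σ}
    {c : ℕ} {d : σ →₀ ℕ} (hG : ∀ g ∈ G, ∀ e ∈ g.support, e ≤ d → c ≤ e s) {k : ℕ}
    (h : monomial d (1 : R) ∈ Ideal.span G ^ k) : c * k ≤ d s := by
  classical
  exact mul_le_of_mem_support_of_mem_span_pow hG k h (by simp [support_monomial]) le_rfl

end MvPolynomial

theorem notMem_rrSet_of_mul_pow_notMem {R : Type*} [CommRing R] {I : Ideal R} {a f : R}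
    (ha : a ∈ I) (h : ∀ k, 1 ≤ k → f * a ^ k ∉ I ^ (k + 1)) : f ∉ rrSet I := by
  simp only [rrSet, Set.mem_iUnion, Set.mem_Ici, SetLike.mem_coe, Submodule.mem_colon]
  rintro ⟨k, hk, hf⟩
  exact h k hk (hf _ (Ideal.pow_mem_pow ha k))

open MvPolynomial
open Fin.NatCast

theorem Fin.natCast_sub_one_inj {n a b : ℕ} [NeZero n] (ha : 1 ≤ a) (han : a ≤ n) (hb : 1 ≤ b)
    (hbn : b ≤ n) : ((a - 1 : ℕ) : Fin n) = ((b - 1 : ℕ) : Fin n) ↔ a = b := by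
  rw [Fin.ext_iff, Fin.val_natCast, Fin.val_natCast, Nat.mod_eq_of_lt (by omega),
    Nat.mod_eq_of_lt (by omega)]
  omega

theorem two_le_of_mem_support_inPgens {K : Type*} [Field K] {n p q r v w rz i k : ℕ} [NeZero n]
    (hnp : n = p + 1) (hi : 1 ≤ i) (hip : i < p) (hq : 1 ≤ q) (hv : 1 ≤ v) :
    ∀ g ∈ inPgens K n p q r v w rz 0 0, ∀ e ∈ g.support,
      e ≤ Finsupp.single ((i - 1 : ℕ) : Fin n) (2 * k + 1)
        + Finsupp.single ((p - 1 : ℕ) : Fin n) (q - 1)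
        + Finsupp.single ((n - 1 : ℕ) : Fin n) (v - 1) → 2 ≤ e ((i - 1 : ℕ) : Fin n) := by
  classical
  have hX (a : Fin n) : (X a : MvPolynomial (Fin n) K) = monomial (Finsupp.single a 1) 1 := rfl
  rintro g (((⟨a, -, hap, rfl⟩ | ⟨j, -, hjp, -, rfl⟩) | rfl) | ⟨a, b, ha, hab, hbp, rfl⟩) e he hle
  all_goals
    simp only [xv, hX, monomial_pow, monomial_mul, one_pow, Finsupp.smul_single, smul_eq_mul,
      mul_one, support_monomial, one_ne_zero, if_false, Finset.mem_singleton] at he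
    subst he
    rw [Finsupp.le_def] at hle
  · have h := hle ((p - 1 : ℕ) : Fin n)
    simp (disch := omega) only [Finsupp.coe_add, Pi.add_apply, Finsupp.single_apply,
      Fin.natCast_sub_one_inj] at h
    split_ifs at h <;> omega
  · have h := hle ((p - 1 : ℕ) : Fin n)
    simp (disch := omega) only [Finsupp.coe_add, Pi.add_apply, Finsupp.single_apply,
      Fin.natCast_sub_one_inj, sub_zero] at h
    split_ifs at h <;> omega
  · have h := hle ((n - 1 : ℕ) : Fin n)
    simp (disch := omega) only [Finsupp.coe_add, Pi.add_apply, Finsupp.single_apply,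
      Fin.natCast_sub_one_inj] at h
    split_ifs at h <;> omega
  · have hA := hle ((a - 1 : ℕ) : Fin n)
    have hB := hle ((b - 1 : ℕ) : Fin n)
    simp (disch := omega) only [Finsupp.coe_add, Pi.add_apply, Finsupp.single_apply,
      Fin.natCast_sub_one_inj, if_true] at hA hB ⊢
    obtain rfl : a = i := by split_ifs at hA <;> omega
    obtain rfl : b = a := by split_ifs at hB <;> omega
    simp

theorem xv_mul_pow_eq_monomial {K : Type*} [Field K] {n : ℕ} [NeZero n] (i p q v k : ℕ) :
    xv K n i * xv K n p ^ (q - 1) * xv K n n ^ (v - 1) * (xv K n i ^ 2) ^ k =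
      monomial (Finsupp.single ((i - 1 : ℕ) : Fin n) (2 * k + 1)
        + Finsupp.single ((p - 1 : ℕ) : Fin n) (q - 1)
        + Finsupp.single ((n - 1 : ℕ) : Fin n) (v - 1)) 1 := by
  calc _ = X ((i - 1 : ℕ) : Fin n) ^ (2 * k + 1) * X ((p - 1 : ℕ) : Fin n) ^ (q - 1)
        * X ((n - 1 : ℕ) : Fin n) ^ (v - 1) := by simp only [xv]; ring
    _ = _ := by simp only [X_pow_eq_monomial, monomial_mul, mul_one]

theorem xv_mul_pow_notMem_span_inPgens_pow {K : Type*} [Field K] {n p q r v w rz i : ℕ}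
    [NeZero n] (hnp : n = p + 1) (hi : 1 ≤ i) (hip : i < p) (hq : 1 ≤ q) (hv : 1 ≤ v) (k : ℕ) :
    xv K n i * xv K n p ^ (q - 1) * xv K n n ^ (v - 1) * (xv K n i ^ 2) ^ k ∉
      Ideal.span (inPgens K n p q r v w rz 0 0) ^ (k + 1) := by
  rw [xv_mul_pow_eq_monomial]
  intro h
  have hdeg := mul_le_of_monomial_mem_span_pow
    (two_le_of_mem_support_inPgens (k := k) hnp hi hip hq hv) h
  simp (disch := omega) only [Finsupp.coe_add, Pi.add_apply, Finsupp.single_apply,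
    Fin.natCast_sub_one_inj, if_true] at hdeg
  split_ifs at hdeg <;> omega

theorem stmt16_general {K : Type*} [Field K]
    (n p : ℕ) [NeZero n] (hp : p = n - 1)
    (qf : ℕ → ℤ) (rf : ℕ → ℕ)
    (hqr : ∀ t : ℕ, 1 ≤ rf t ∧ rf t ≤ p ∧ (t : ℤ) = qf t * p + rf t)
    (v : ℕ) (hv1 : 1 ≤ v) (w z : ℕ) (q r : ℕ)
    (ε : ℕ) (hε : ε = if rf z < r then 0 else 1)
    (inP : Ideal (MvPolynomial (Fin n) K))
    (hinP : inP = Ideal.span (inPgens K n p q r v w (rf z) ε (qf z)))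
    (hε0 : ε = 0) (hqz0 : qf z = 0) (hq1 : 1 ≤ q) :
    ∀ i : ℕ, r ≤ i + rf z → i ≤ p - 1 →
      xv K n i * xv K n p ^ (q - 1) * xv K n n ^ (v - 1) ∉ rrSet inP ∧
      ∀ k : ℕ, 1 ≤ k →
        xv K n i * xv K n p ^ (q - 1) * xv K n n ^ (v - 1) * (xv K n i ^ 2) ^ k ∉
          inP ^ (k + 1) := by
  intro i hri hip
  have hrz : rf z < r := by
    by_contra h
    rw [if_neg h] at hε
    omega
  have hi : 1 ≤ i := by have := (hqr z).1; omega
  have hnp : n = p + 1 := by have := NeZero.pos n; omega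
  rw [hε0, hqz0] at hinP
  have hsq : xv K n i ^ 2 ∈ inP :=
    hinP ▸ Ideal.subset_span (Or.inr ⟨i, i, hi, le_rfl, hip, sq _⟩)
  have hkey (k : ℕ) := hinP ▸ xv_mul_pow_notMem_span_inPgens_pow (K := K) (r := r) (w := w)
    (rz := rf z) hnp hi (by omega) hq1 hv1 k
  exact ⟨notMem_rrSet_of_mul_pow_notMem hsq fun k _ => hkey k, fun k _ => hkey k⟩

/-- assume `ε = 0`, `qz = 0` and `q ≥ 1`. Then for every `i` with
`r − rz ≤ i ≤ p−1`, the monomial `x_i x_p^{q−1} x_n^{v−1}` is not in the Ratliff-Rush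
closure of `inP`; in particular there is no `m ≥ 1` with
`x_i x_p^{q−1} x_n^{v−1} (x_i^2)^m ∈ (inP)^{m+1}`. -/
theorem stmt16 {K : Type*} [Field K]
    (n p : ℕ) [NeZero n] (hn : 2 ≤ n) (hp : p = n - 1)
    (m : ℕ → ℕ) (hm0 : 0 < m 0) (hmn : 0 < m n)
    (harith : ∃ d : ℕ, 0 < d ∧ ∀ i < p, m (i + 1) = m i + d)
    (hgcd : ∀ c : ℕ, (∀ i ≤ p, c ∣ m i) → c ∣ m n → c = 1)
    (Γ Γ' : AddSubmonoid ℤ)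
    (hΓ : Γ = AddSubmonoid.closure ((fun i => (m i : ℤ)) '' (Set.Iic p ∪ {n})))
    (hΓ' : Γ' = AddSubmonoid.closure ((fun i => (m i : ℤ)) '' Set.Iic p))
    (hmin : ∀ j ∈ (Set.Iic p ∪ {n} : Set ℕ),
      (m j : ℤ) ∉ AddSubmonoid.closure ((fun i => (m i : ℤ)) '' ((Set.Iic p ∪ {n}) \ {j})))
    (qf : ℕ → ℤ) (rf : ℕ → ℕ)
    (hqr : ∀ t : ℕ, 1 ≤ rf t ∧ rf t ≤ p ∧ (t : ℤ) = qf t * p + rf t)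
    (g : ℕ → ℤ) (hg : ∀ t, g t = qf t * m p + m (rf t))
    (S : Set ℤ) (hS : S = {γ : ℤ | γ ∈ Γ ∧ γ - m 0 ∉ Γ})
    (u : ℕ) (hu : g u ∉ S ∧ ∀ t < u, g t ∈ S)
    (v : ℕ) (hv1 : 1 ≤ v) (hv2 : (v : ℤ) * m n ∈ Γ')
    (hv3 : ∀ b : ℕ, 1 ≤ b → b < v → (b : ℤ) * m n ∉ Γ')
    (w z L mu : ℕ) (hw : w ≤ v - 1) (hz : z ≤ u - 1) (hL : 1 ≤ L)
    (hgu : g u = (L : ℤ) * m 0 + (w : ℤ) * m n)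
    (hvmn : (v : ℤ) * m n = (mu : ℤ) * m 0 + g z)
    (q r : ℕ) (hq : (q : ℤ) = qf u) (hr : r = rf u)
    (ε : ℕ) (hε : ε = if rf z < r then 0 else 1)
    (inP : Ideal (MvPolynomial (Fin n) K))
    (hinP : inP = Ideal.span (inPgens K n p q r v w (rf z) ε (qf z)))
    (hε0 : ε = 0) (hqz0 : qf z = 0) (hq1 : 1 ≤ q) :
    ∀ i : ℕ, r ≤ i + rf z → i ≤ p - 1 →
      xv K n i * xv K n p ^ (q - 1) * xv K n n ^ (v - 1) ∉ rrSet inP ∧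
      ∀ k : ℕ, 1 ≤ k →
        xv K n i * xv K n p ^ (q - 1) * xv K n n ^ (v - 1) * (xv K n i ^ 2) ^ k ∉
          inP ^ (k + 1) :=
  stmt16_general n p hp qf rf hqr v hv1 w z q r ε hε inP hinP hε0 hqz0 hq1
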